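/- arXiv:2211.11811 — 2 statements merged into one kernel-verified Lean document; each statement's English description precedes it below -/
import Mathlib

section
/- Let U > 0 and let C be a set of regular bodies of R^3 (compact sets equal to the closure of their interior) each of Lebesgue volume U, which is path-connected for the Hausdorff distance on compact sets. For B0, B1 in C define d(B0,B1) as the infimum, over all continuous paths gamma : [0,1] -> C (continuous for the Hausdorff metric) with gamma(0) = B0 and gamma(1) = B1, of the swept volume V[gamma] = vol(union over t in [0,1] of gamma(t)) - U, where vol denotes Lebesgue measure. Then d is a metric on C: for all B0, B1, B2 in C one has d(B0,B1) >= 0, d(B0,B1) = d(B1,B0), d(B0,B2) <= d(B0,B1) + d(B1,B2), and d(B0,B1) = 0 if and only if B0 = B1. -/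
open MeasureTheory TopologicalSpace Set

local notation "E" => EuclideanSpace ℝ (Fin 3)

/-- The swept volume of a path of compact bodies: the Lebesgue volume of the
swept region minus the common volume `U` of the bodies. -/
noncomputable def sweptVolume (U : ℝ)
    (γ : unitInterval → NonemptyCompacts E) : ℝ :=
  (volume (⋃ t, (γ t : Set E))).toReal - U

/-- The minimum swept volume distance between two bodies in the configuration
space `C`: the infimum over continuous paths in `C` of the swept volume. -/
noncomputable def msvDist (U : ℝ) (C : Set (NonemptyCompacts E))
    (B0 B1 : NonemptyCompacts E) : ℝ :=
  sInf { v : ℝ | ∃ γ : Path B0 B1, (∀ t, γ t ∈ C) ∧ v = sweptVolume U (fun t => γ t) }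

open Metric EMetric Bornology

lemma sweptCompact {B0 B1 : NonemptyCompacts E} (γ : Path B0 B1) :
    IsCompact (⋃ t, ((γ t : NonemptyCompacts E) : Set E)) := by
  set K := ⋃ t, ((γ t : NonemptyCompacts E) : Set E) with hK
  have hcont : Continuous (fun t => (γ t : NonemptyCompacts E)) := γ.continuous
  obtain ⟨R, hR⟩ := (isCompact_range hcont).isBounded.subset_closedBall (γ 0)
  have hsub : K ⊆ cthickening R ((γ 0 : NonemptyCompacts E) : Set E) := by
    rintro x hx
    obtain ⟨t, ht⟩ := mem_iUnion.1 hx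
    rw [mem_cthickening_iff]
    calc infEdist x ((γ 0 : NonemptyCompacts E) : Set E)
        ≤ hausdorffEdist ((γ t : NonemptyCompacts E) : Set E) (γ 0 : NonemptyCompacts E) :=
          infEdist_le_hausdorffEdist_of_mem ht
      _ = edist (γ t) (γ 0) := rfl
      _ ≤ ENNReal.ofReal R := by
          rw [edist_dist]
          exact ENNReal.ofReal_le_ofReal (by simpa using hR (mem_range_self t))
  have hbdd : IsBounded K :=
    ((γ 0).isCompact.isBounded.cthickening).subset hsub
  have hclosed : IsClosed K := by
    rw [← closure_subset_iff_isClosed]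
    intro x hx
    set f : unitInterval → ℝ := fun t => infDist x ((γ t : NonemptyCompacts E) : Set E) with hf
    have hlip : LipschitzWith 1 (fun s : NonemptyCompacts E => infDist x (s : Set E)) := by
      apply LipschitzWith.of_dist_le_mul
      intro a b
      rw [NNReal.coe_one, one_mul, Real.dist_eq, abs_sub_le_iff]
      constructor
      · have := infDist_le_infDist_add_hausdorffDist (x := x)
          (s := (b : Set E)) (t := (a : Set E)) (edist_ne_top b a)
        have hd : hausdorffDist (b : Set E) (a : Set E) = dist a b := by
          rw [NonemptyCompacts.dist_eq, hausdorffDist_comm]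
        linarith [this, hd]
      · have := infDist_le_infDist_add_hausdorffDist (x := x)
          (s := (a : Set E)) (t := (b : Set E)) (edist_ne_top a b)
        have hd : hausdorffDist (a : Set E) (b : Set E) = dist a b := NonemptyCompacts.dist_eq.symm
        linarith [this, hd]
    have hfc : Continuous f := hlip.continuous.comp hcont
    obtain ⟨t0, -, ht0⟩ := isCompact_univ.exists_isMinOn (Set.univ_nonempty) hfc.continuousOn
    have hmin : ∀ t, f t0 ≤ f t := fun t => ht0 (mem_univ t)
    have hzero : f t0 = 0 := by
      refine le_antisymm ?_ infDist_nonneg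
      by_contra hpos
      push_neg at hpos
      obtain ⟨y, hyK, hxy⟩ := Metric.mem_closure_iff.1 hx (f t0) hpos
      obtain ⟨t, hyt⟩ := mem_iUnion.1 hyK
      exact absurd (lt_of_le_of_lt (infDist_le_dist_of_mem hyt) hxy) (not_lt.2 (hmin t))
    have : x ∈ ((γ t0 : NonemptyCompacts E) : Set E) :=
      ((γ t0).isCompact.isClosed.mem_iff_infDist_zero (γ t0).nonempty).2 hzero
    exact mem_iUnion.2 ⟨t0, this⟩
  exact isCompact_of_isClosed_isBounded hclosed hbdd

lemma sweptVolume_ge (U : ℝ) (hU : 0 < U) {B0 B1 : NonemptyCompacts E} (γ : Path B0 B1)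
    {A : NonemptyCompacts E} (hA : volume (A : Set E) = ENNReal.ofReal U)
    (hAsub : (A : Set E) ⊆ ⋃ t, ((γ t : NonemptyCompacts E) : Set E))
    {V : Set E} (hVm : MeasurableSet V)
    (hVsub : V ⊆ ⋃ t, ((γ t : NonemptyCompacts E) : Set E))
    (hdisj : Disjoint (A : Set E) V) :
    (volume V).toReal ≤ sweptVolume U (fun t => γ t) := by
  set K := ⋃ t, ((γ t : NonemptyCompacts E) : Set E) with hK
  have hKc : IsCompact K := sweptCompact γ
  have hKfin : volume K ≠ ⊤ := hKc.measure_lt_top.ne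
  have hVfin : volume V ≠ ⊤ := ((measure_mono hVsub).trans_lt hKc.measure_lt_top).ne
  have hsub : (A : Set E) ∪ V ⊆ K := union_subset hAsub hVsub
  have h1 : volume ((A : Set E) ∪ V) = ENNReal.ofReal U + volume V := by
    rw [measure_union hdisj hVm, hA]
  have h2 : ENNReal.ofReal U + volume V ≤ volume K := h1 ▸ measure_mono hsub
  have h3 : U + (volume V).toReal ≤ (volume K).toReal := by
    have := ENNReal.toReal_mono hKfin h2
    rwa [ENNReal.toReal_add ENNReal.ofReal_ne_top hVfin, ENNReal.toReal_ofReal hU.le] at this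
  simp only [sweptVolume]
  linarith

lemma sweptVolume_nonneg (U : ℝ) (hU : 0 < U) {B0 B1 : NonemptyCompacts E} (γ : Path B0 B1)
    (h0 : volume ((B0 : NonemptyCompacts E) : Set E) = ENNReal.ofReal U) :
    0 ≤ sweptVolume U (fun t => γ t) := by
  have hAsub : ((B0 : NonemptyCompacts E) : Set E) ⊆ ⋃ t, ((γ t : NonemptyCompacts E) : Set E) := by
    have := subset_iUnion (fun t => ((γ t : NonemptyCompacts E) : Set E)) 0
    rwa [γ.source] at this
  have := sweptVolume_ge U hU γ h0 hAsub MeasurableSet.empty (empty_subset _) (disjoint_empty _)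
  simpa using this

section helpers

variable (U : ℝ) (C : Set (NonemptyCompacts E))

lemma msv_nonneg_elems (hU : 0 < U)
    (hvol : ∀ B ∈ C, volume (B : Set E) = ENNReal.ofReal U)
    {B0 B1 : NonemptyCompacts E} (hB0 : B0 ∈ C) :
    ∀ v ∈ { v : ℝ | ∃ γ : Path B0 B1, (∀ t, γ t ∈ C) ∧ v = sweptVolume U (fun t => γ t) },
      0 ≤ v := by
  rintro v ⟨γ, hγ, rfl⟩
  exact sweptVolume_nonneg U hU γ (hvol B0 hB0)

lemma msv_bddBelow (hU : 0 < U)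
    (hvol : ∀ B ∈ C, volume (B : Set E) = ENNReal.ofReal U)
    {B0 B1 : NonemptyCompacts E} (hB0 : B0 ∈ C) :
    BddBelow { v : ℝ | ∃ γ : Path B0 B1, (∀ t, γ t ∈ C) ∧ v = sweptVolume U (fun t => γ t) } :=
  ⟨0, fun v hv => msv_nonneg_elems U C hU hvol hB0 v hv⟩

lemma msv_nonempty (hconn : IsPathConnected C)
    {B0 B1 : NonemptyCompacts E} (hB0 : B0 ∈ C) (hB1 : B1 ∈ C) :
    Set.Nonempty
      { v : ℝ | ∃ γ : Path B0 B1, (∀ t, γ t ∈ C) ∧ v = sweptVolume U (fun t => γ t) } := by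
  obtain ⟨γ, hγ⟩ := hconn.joinedIn B0 hB0 B1 hB1
  exact ⟨sweptVolume U (fun t => γ t), γ, hγ, rfl⟩

lemma msv_symm {B0 B1 : NonemptyCompacts E} :
    msvDist U C B0 B1 = msvDist U C B1 B0 := by
  have key : ∀ (X Y : NonemptyCompacts E),
      { v : ℝ | ∃ γ : Path X Y, (∀ t, γ t ∈ C) ∧ v = sweptVolume U (fun t => γ t) } ⊆
      { v : ℝ | ∃ γ : Path Y X, (∀ t, γ t ∈ C) ∧ v = sweptVolume U (fun t => γ t) } := by
    rintro X Y v ⟨γ, hγ, rfl⟩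
    refine ⟨γ.symm, fun t => hγ _, ?_⟩
    have : (⋃ t, ((γ.symm t : NonemptyCompacts E) : Set E)) =
        ⋃ t, ((γ t : NonemptyCompacts E) : Set E) := by
      have hsurj : Function.Surjective (unitInterval.symm) :=
        unitInterval.symm_involutive.surjective
      exact hsurj.iUnion_comp (fun t => ((γ t : NonemptyCompacts E) : Set E))
    simp only [sweptVolume, this]
  unfold msvDist
  exact congrArg sInf (Subset.antisymm (key B0 B1) (key B1 B0))

lemma msv_nonneg (hU : 0 < U)
    (hvol : ∀ B ∈ C, volume (B : Set E) = ENNReal.ofReal U)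
    {B0 B1 : NonemptyCompacts E} (hB0 : B0 ∈ C) :
    0 ≤ msvDist U C B0 B1 :=
  Real.sInf_nonneg (msv_nonneg_elems U C hU hvol hB0)

lemma msv_triangle (hU : 0 < U)
    (hvol : ∀ B ∈ C, volume (B : Set E) = ENNReal.ofReal U)
    (hconn : IsPathConnected C)
    {B0 B1 B2 : NonemptyCompacts E} (hB0 : B0 ∈ C) (hB1 : B1 ∈ C) (hB2 : B2 ∈ C) :
    msvDist U C B0 B2 ≤ msvDist U C B0 B1 + msvDist U C B1 B2 := by
  have hne01 := msv_nonempty U C hconn hB0 hB1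
  have hne12 := msv_nonempty U C hconn hB1 hB2
  have hbdd02 := msv_bddBelow U C hU hvol hB0 (B1 := B2)
  have key : ∀ v1 ∈ { v : ℝ | ∃ γ : Path B0 B1, (∀ t, γ t ∈ C) ∧
        v = sweptVolume U (fun t => γ t) },
      ∀ v2 ∈ { v : ℝ | ∃ γ : Path B1 B2, (∀ t, γ t ∈ C) ∧
        v = sweptVolume U (fun t => γ t) },
      msvDist U C B0 B2 ≤ v1 + v2 := by
    rintro v1 ⟨γ1, hγ1, rfl⟩ v2 ⟨γ2, hγ2, rfl⟩
    set γ : Path B0 B2 := γ1.trans γ2 with hγdef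
    have hmem : ∀ t, γ t ∈ C := by
      intro t
      rw [hγdef, Path.trans_apply]
      split_ifs
      · exact hγ1 _
      · exact hγ2 _
    set A1 := ⋃ t, ((γ1 t : NonemptyCompacts E) : Set E) with hA1
    set A2 := ⋃ t, ((γ2 t : NonemptyCompacts E) : Set E) with hA2
    have hA1c : IsCompact A1 := sweptCompact γ1
    have hA2c : IsCompact A2 := sweptCompact γ2
    have hKsub : (⋃ t, ((γ t : NonemptyCompacts E) : Set E)) ⊆ A1 ∪ A2 := by
      intro x hx
      obtain ⟨t, hxt⟩ := mem_iUnion.1 hx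
      rw [hγdef, Path.trans_apply] at hxt
      split_ifs at hxt
      · exact Or.inl (mem_iUnion.2 ⟨_, hxt⟩)
      · exact Or.inr (mem_iUnion.2 ⟨_, hxt⟩)
    have hB1sub1 : ((B1 : NonemptyCompacts E) : Set E) ⊆ A1 := by
      have := subset_iUnion (fun t => ((γ1 t : NonemptyCompacts E) : Set E)) 1
      rwa [γ1.target] at this
    have hB1sub2 : ((B1 : NonemptyCompacts E) : Set E) ⊆ A2 := by
      have := subset_iUnion (fun t => ((γ2 t : NonemptyCompacts E) : Set E)) 0
      rwa [γ2.source] at this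
    have hinter : ENNReal.ofReal U ≤ volume (A1 ∩ A2) := by
      rw [← hvol B1 hB1]
      exact measure_mono (subset_inter hB1sub1 hB1sub2)
    have hEq : volume (A1 ∪ A2) + volume (A1 ∩ A2) = volume A1 + volume A2 :=
      measure_union_add_inter A1 hA2c.measurableSet
    have fA1 : volume A1 ≠ ⊤ := hA1c.measure_lt_top.ne
    have fA2 : volume A2 ≠ ⊤ := hA2c.measure_lt_top.ne
    have funion : volume (A1 ∪ A2) ≠ ⊤ := (hA1c.union hA2c).measure_lt_top.ne
    have finter : volume (A1 ∩ A2) ≠ ⊤ :=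
      ((measure_mono inter_subset_right).trans_lt hA2c.measure_lt_top).ne
    have hEqR : (volume (A1 ∪ A2)).toReal + (volume (A1 ∩ A2)).toReal =
        (volume A1).toReal + (volume A2).toReal := by
      have := congrArg ENNReal.toReal hEq
      rwa [ENNReal.toReal_add funion finter, ENNReal.toReal_add fA1 fA2] at this
    have hKle : (volume (⋃ t, ((γ t : NonemptyCompacts E) : Set E))).toReal ≤
        (volume (A1 ∪ A2)).toReal :=
      ENNReal.toReal_mono funion (measure_mono hKsub)
    have hUi : U ≤ (volume (A1 ∩ A2)).toReal := by
      have := ENNReal.toReal_mono finter hinter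
      rwa [ENNReal.toReal_ofReal hU.le] at this
    have hle : sweptVolume U (fun t => γ t) ≤
        sweptVolume U (fun t => γ1 t) + sweptVolume U (fun t => γ2 t) := by
      simp only [sweptVolume, ← hA1, ← hA2]
      linarith
    calc msvDist U C B0 B2 ≤ sweptVolume U (fun t => γ t) := csInf_le hbdd02 ⟨γ, hmem, rfl⟩
      _ ≤ _ := hle
  have step1 : ∀ v1 ∈ { v : ℝ | ∃ γ : Path B0 B1, (∀ t, γ t ∈ C) ∧
      v = sweptVolume U (fun t => γ t) },
      msvDist U C B0 B2 - v1 ≤ msvDist U C B1 B2 := by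
    intro v1 h1
    exact le_csInf hne12 fun v2 h2 => by linarith [key v1 h1 v2 h2]
  have step2 : msvDist U C B0 B2 - msvDist U C B1 B2 ≤ msvDist U C B0 B1 :=
    le_csInf hne01 fun v1 h1 => by linarith [step1 v1 h1]
  linarith

lemma msv_refl (hU : 0 < U)
    (hvol : ∀ B ∈ C, volume (B : Set E) = ENNReal.ofReal U)
    {B0 : NonemptyCompacts E} (hB0 : B0 ∈ C) :
    msvDist U C B0 B0 = 0 := by
  refine le_antisymm ?_ (msv_nonneg U C hU hvol hB0)
  refine csInf_le (msv_bddBelow U C hU hvol hB0) ⟨Path.refl B0, fun t => hB0, ?_⟩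
  have h1 : (⋃ t : unitInterval, (((Path.refl B0) t : NonemptyCompacts E) : Set E)) =
      (B0 : Set E) := by
    exact iUnion_const (B0 : Set E)
  simp only [sweptVolume, h1, hvol B0 hB0, ENNReal.toReal_ofReal hU.le, sub_self]

lemma msv_pos (hU : 0 < U)
    (hvol : ∀ B ∈ C, volume (B : Set E) = ENNReal.ofReal U)
    (hconn : IsPathConnected C)
    {B0 B1 : NonemptyCompacts E} (hB0 : B0 ∈ C) (hB1 : B1 ∈ C)
    (hreg1 : (B1 : Set E) = closure (interior (B1 : Set E)))
    (hx : ∃ x, x ∈ (B1 : Set E) ∧ x ∉ (B0 : Set E)) :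
    0 < msvDist U C B0 B1 := by
  obtain ⟨x, hx1, hx0⟩ := hx
  set V : Set E := interior (B1 : Set E) \ (B0 : Set E) with hV
  have hVopen : IsOpen V := isOpen_interior.sdiff B0.isCompact.isClosed
  have hVne : V.Nonempty := by
    have hxc : x ∈ closure (interior (B1 : Set E)) := hreg1 ▸ hx1
    obtain ⟨y, hyo, hyi⟩ := _root_.mem_closure_iff.1 hxc ((B0 : Set E))ᶜ
      B0.isCompact.isClosed.isOpen_compl hx0
    exact ⟨y, hyi, hyo⟩
  have hVsubB1 : V ⊆ (B1 : Set E) := fun y hy => interior_subset hy.1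
  have hVfin : volume V ≠ ⊤ :=
    ((measure_mono hVsubB1).trans_lt B1.isCompact.measure_lt_top).ne
  have hVpos : 0 < volume V := hVopen.measure_pos volume hVne
  have hε : 0 < (volume V).toReal := ENNReal.toReal_pos hVpos.ne' hVfin
  refine lt_of_lt_of_le hε (le_csInf (msv_nonempty U C hconn hB0 hB1) ?_)
  rintro v ⟨γ, hγ, rfl⟩
  have hAsub : ((B0 : NonemptyCompacts E) : Set E) ⊆
      ⋃ t, ((γ t : NonemptyCompacts E) : Set E) := by
    have := subset_iUnion (fun t => ((γ t : NonemptyCompacts E) : Set E)) 0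
    rwa [γ.source] at this
  have hB1sub : ((B1 : NonemptyCompacts E) : Set E) ⊆
      ⋃ t, ((γ t : NonemptyCompacts E) : Set E) := by
    have := subset_iUnion (fun t => ((γ t : NonemptyCompacts E) : Set E)) 1
    rwa [γ.target] at this
  have hdisj : Disjoint ((B0 : NonemptyCompacts E) : Set E) V :=
    Set.disjoint_left.2 fun a ha hav => hav.2 ha
  exact sweptVolume_ge U hU γ (hvol B0 hB0) hAsub hVopen.measurableSet
    (hVsubB1.trans hB1sub) hdisj

end helpers

theorem stmt0 (U : ℝ) (hU : 0 < U) (C : Set (NonemptyCompacts E))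
    (hreg : ∀ B ∈ C, (B : Set E) = closure (interior (B : Set E)))
    (hvol : ∀ B ∈ C, volume (B : Set E) = ENNReal.ofReal U)
    (hconn : IsPathConnected C) :
    ∀ B0 ∈ C, ∀ B1 ∈ C, ∀ B2 ∈ C,
      0 ≤ msvDist U C B0 B1 ∧
      msvDist U C B0 B1 = msvDist U C B1 B0 ∧
      msvDist U C B0 B2 ≤ msvDist U C B0 B1 + msvDist U C B1 B2 ∧
      (msvDist U C B0 B1 = 0 ↔ B0 = B1) := by
  intro B0 hB0 B1 hB1 B2 hB2
  refine ⟨msv_nonneg U C hU hvol hB0, msv_symm U C,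
    msv_triangle U C hU hvol hconn hB0 hB1 hB2, ?_, ?_⟩
  · intro h
    by_contra hne
    have hsets : (B0 : Set E) ≠ (B1 : Set E) := fun hs => hne (NonemptyCompacts.ext hs)
    have hcase : ¬((B1 : Set E) ⊆ (B0 : Set E)) ∨ ¬((B0 : Set E) ⊆ (B1 : Set E)) := by
      by_contra hc
      push_neg at hc
      exact hsets (Subset.antisymm hc.2 hc.1)
    rcases hcase with hc | hc
    · obtain ⟨x, hx1, hx0⟩ := not_subset.1 hc
      exact absurd h (msv_pos U C hU hvol hconn hB0 hB1 (hreg B1 hB1) ⟨x, hx1, hx0⟩).ne'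
    · obtain ⟨x, hx0, hx1⟩ := not_subset.1 hc
      have := msv_pos U C hU hvol hconn hB1 hB0 (hreg B0 hB0) ⟨x, hx0, hx1⟩
      rw [← msv_symm U C] at this
      exact absurd h this.ne'
  · rintro rfl
    exact msv_refl U C hU hvol hB0
end

section
/- Let U > 0 and let B0 and B1 be two distinct regular bodies of R^3 (compact sets equal to the closure of their interior), both of Lebesgue volume U. Then for every map gamma : [0,1] -> {nonempty compact subsets of R^3} that is continuous for the Hausdorff metric and satisfies gamma(0) = B0 and gamma(1) = B1, the Lebesgue volume of the swept region A[gamma] = union over t in [0,1] of gamma(t) is strictly greater than U; equivalently, the swept volume V[gamma] = vol(A[gamma]) - U is strictly positive. -/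
open MeasureTheory TopologicalSpace Set

local notation "E" => EuclideanSpace ℝ (Fin 3)

theorem stmt3 (U : ℝ) (hU : 0 < U) (B0 B1 : NonemptyCompacts E)
    (h0r : (B0 : Set E) = closure (interior (B0 : Set E)))
    (h1r : (B1 : Set E) = closure (interior (B1 : Set E)))
    (h0v : volume (B0 : Set E) = ENNReal.ofReal U)
    (h1v : volume (B1 : Set E) = ENNReal.ofReal U)
    (hne : B0 ≠ B1)
    (γ : unitInterval → NonemptyCompacts E) (hγ : Continuous γ)
    (hγ0 : γ 0 = B0) (hγ1 : γ 1 = B1) :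
    ENNReal.ofReal U < volume (⋃ t, (γ t : Set E)) ∧
    0 < (volume (⋃ t, (γ t : Set E))).toReal - U := by
  set A : Set E := ⋃ t, (γ t : Set E) with hA
  -- the swept region is contained in a compact thickening, so it has finite volume
  obtain ⟨R, hR⟩ := (isCompact_range hγ).isBounded.subset_closedBall B0
  have hAsub : A ⊆ Metric.cthickening R (B0 : Set E) := by
    rintro x hx
    obtain ⟨t, hxt⟩ := mem_iUnion.1 hx
    rw [Metric.mem_cthickening_iff]
    calc EMetric.infEdist x (B0 : Set E)
        ≤ EMetric.hausdorffEdist ((γ t : Set E)) (B0 : Set E) :=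
          EMetric.infEdist_le_hausdorffEdist_of_mem hxt
      _ = edist (γ t) B0 := rfl
      _ = ENNReal.ofReal (dist (γ t) B0) := edist_dist _ _
      _ ≤ ENNReal.ofReal R := by
          apply ENNReal.ofReal_le_ofReal
          have := hR (mem_range_self t)
          rwa [Metric.mem_closedBall] at this
  have hAfin : volume A ≠ ⊤ := by
    refine ne_top_of_le_ne_top ?_ (measure_mono hAsub)
    exact (Metric.isCompact_of_isClosed_isBounded Metric.isClosed_cthickening
      (B0.isCompact.isBounded.cthickening)).measure_ne_top
  -- the difference B1 \ B0 has positive volume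
  have hdiffpos : 0 < volume ((B1 : Set E) \ (B0 : Set E)) := by
    rcases eq_zero_or_pos (volume ((B1 : Set E) \ (B0 : Set E))) with h | h
    · exfalso
      -- interior B1 \ B0 is open with zero measure, hence empty, so B1 ⊆ B0
      have hsub1 : (B1 : Set E) ⊆ (B0 : Set E) := by
        have hopen : IsOpen (interior (B1 : Set E) \ (B0 : Set E)) :=
          IsOpen.sdiff isOpen_interior B0.isCompact.isClosed
        have hz : volume (interior (B1 : Set E) \ (B0 : Set E)) = 0 :=
          measure_mono_null (diff_subset_diff_left interior_subset) h
        have hempty : interior (B1 : Set E) \ (B0 : Set E) = ∅ := by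
          by_contra hcon
          exact absurd hz (ne_of_gt (hopen.measure_pos volume
            (nonempty_iff_ne_empty.2 hcon)))
        have hint : interior (B1 : Set E) ⊆ (B0 : Set E) :=
          diff_eq_empty.1 hempty
        calc (B1 : Set E) = closure (interior (B1 : Set E)) := h1r
          _ ⊆ closure (B0 : Set E) := closure_mono hint
          _ = (B0 : Set E) := B0.isCompact.isClosed.closure_eq
      -- then B0 \ B1 also has zero measure, so B0 ⊆ B1, contradiction with B0 ≠ B1
      have hz0 : volume ((B0 : Set E) \ (B1 : Set E)) = 0 := by
        have := measure_diff hsub1 B1.isCompact.isClosed.measurableSet.nullMeasurableSet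
          (by rw [h1v]; exact ENNReal.ofReal_ne_top)
        rw [this, h0v, h1v, tsub_self]
      have hsub0 : (B0 : Set E) ⊆ (B1 : Set E) := by
        have hopen : IsOpen (interior (B0 : Set E) \ (B1 : Set E)) :=
          IsOpen.sdiff isOpen_interior B1.isCompact.isClosed
        have hz : volume (interior (B0 : Set E) \ (B1 : Set E)) = 0 :=
          measure_mono_null (diff_subset_diff_left interior_subset) hz0
        have hempty : interior (B0 : Set E) \ (B1 : Set E) = ∅ := by
          by_contra hcon
          exact absurd hz (ne_of_gt (hopen.measure_pos volume
            (nonempty_iff_ne_empty.2 hcon)))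
        have hint : interior (B0 : Set E) ⊆ (B1 : Set E) :=
          diff_eq_empty.1 hempty
        calc (B0 : Set E) = closure (interior (B0 : Set E)) := h0r
          _ ⊆ closure (B1 : Set E) := closure_mono hint
          _ = (B1 : Set E) := B1.isCompact.isClosed.closure_eq
      exact hne (NonemptyCompacts.ext (subset_antisymm hsub0 hsub1))
    · exact h
  -- main strict inequality
  have hkey : ENNReal.ofReal U < volume A := by
    have hsub : (B0 : Set E) ∪ ((B1 : Set E) \ (B0 : Set E)) ⊆ A := by
      apply union_subset
      · rw [← hγ0]; exact subset_iUnion (fun t => (γ t : Set E)) 0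
      · refine diff_subset.trans ?_
        rw [← hγ1]; exact subset_iUnion (fun t => (γ t : Set E)) 1
    have hmeas : volume ((B0 : Set E) ∪ ((B1 : Set E) \ (B0 : Set E)))
        = volume (B0 : Set E) + volume ((B1 : Set E) \ (B0 : Set E)) := by
      apply measure_union disjoint_sdiff_right
        ((B1.isCompact.isClosed.measurableSet).diff B0.isCompact.isClosed.measurableSet)
    calc ENNReal.ofReal U = volume (B0 : Set E) + 0 := by rw [h0v, add_zero]
      _ < volume (B0 : Set E) + volume ((B1 : Set E) \ (B0 : Set E)) := by
          apply ENNReal.add_lt_add_left _ hdiffpos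
          rw [h0v]; exact ENNReal.ofReal_ne_top
      _ = volume ((B0 : Set E) ∪ ((B1 : Set E) \ (B0 : Set E))) := hmeas.symm
      _ ≤ volume A := measure_mono hsub
  refine ⟨hkey, ?_⟩
  have h1 : U < (volume A).toReal := by
    have := (ENNReal.toReal_lt_toReal ENNReal.ofReal_ne_top hAfin).2 hkey
    rwa [ENNReal.toReal_ofReal hU.le] at this
  linarith
end
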